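/- Let $n, s, k$ be positive integers with $k \ge 2$, $s \ge 2$, $n \ge 2k + 6$ and $n \ge (k+1)s - 2k + 2$. If $s > 2$, then the signless Laplacian spectral radius of the graph $K_s \vee ((ks-2k+2)K_1 \cup K_{n-(k+1)s+2k-2})$ is at most the signless Laplacian spectral radius of the graph $K_2 \vee (2K_1 \cup K_{n-4})$ (the $s=2$ member of this family). -/

import Mathlib

open Classical in
/-- The adjacency matrix of a simple graph, with real entries. -/
noncomputable def adjMat {V : Type} [Fintype V] (G : SimpleGraph V) : Matrix V V ℝ :=
  fun i j => if G.Adj i j then 1 else 0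

/-- The largest real eigenvalue of a real matrix. -/
noncomputable def maxEig {V : Type} [Fintype V] (M : Matrix V V ℝ) : ℝ :=
  sSup {t : ℝ | ∃ x : V → ℝ, x ≠ 0 ∧ M.mulVec x = t • x}

/-- The spectral radius (largest adjacency eigenvalue) of a graph. -/
noncomputable def specRad {V : Type} [Fintype V] (G : SimpleGraph V) : ℝ :=
  maxEig (adjMat G)

/-- The signless Laplacian matrix `Q(G) = D(G) + A(G)`. -/
noncomputable def qMat {V : Type} [Fintype V] [DecidableEq V] (G : SimpleGraph V) :
    Matrix V V ℝ :=
  Matrix.diagonal (fun v => ∑ w, adjMat G v w) + adjMat G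

/-- The signless Laplacian spectral radius of a graph. -/
noncomputable def qRad {V : Type} [Fintype V] [DecidableEq V] (G : SimpleGraph V) : ℝ :=
  maxEig (qMat G)

/-- The graph `K_s ∨ (a K_1 ∪ K_{n-s-a})` on vertex set `Fin n`:
the first `s` vertices form a clique joined to everything, the next `a` vertices are
independent, and the last `n - s - a` vertices form a clique. -/
def modelA (n s a : ℕ) : SimpleGraph (Fin n) where
  Adj i j := i ≠ j ∧ ((i : ℕ) < s ∨ (j : ℕ) < s ∨ (s + a ≤ (i : ℕ) ∧ s + a ≤ (j : ℕ)))
  symm := ⟨by rintro i j ⟨h1, h2⟩; exact ⟨h1.symm, by tauto⟩⟩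
  loopless := ⟨fun i h => h.1 rfl⟩

/-- The graph `s K_1 ∨ (a K_1 ∪ K_{n-s-a})` on vertex set `Fin n`:
the first `s` vertices are independent but joined to everything else, the next `a`
vertices are independent, and the last `n - s - a` vertices form a clique. -/
def modelB (n s a : ℕ) : SimpleGraph (Fin n) where
  Adj i j := i ≠ j ∧ (((i : ℕ) < s ∧ ¬ (j : ℕ) < s) ∨ ((j : ℕ) < s ∧ ¬ (i : ℕ) < s) ∨
    (s + a ≤ (i : ℕ) ∧ s + a ≤ (j : ℕ)))
  symm := ⟨by rintro i j ⟨h1, h2⟩; exact ⟨h1.symm, by tauto⟩⟩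
  loopless := ⟨fun i h => h.1 rfl⟩

/-- `M` is a matching of `G`: a set of pairwise disjoint edges of `G`. -/
def IsMatchingIn {V : Type} (G : SimpleGraph V) (M : Finset (Sym2 V)) : Prop :=
  (↑M : Set (Sym2 V)) ⊆ G.edgeSet ∧
    ∀ e ∈ M, ∀ f ∈ M, e ≠ f → ∀ v : V, ¬(v ∈ e ∧ v ∈ f)

/-- `H` is an `S(k)`-factor of `G`: a spanning subgraph of `G` each of whose connected
components is isomorphic to a star `K_{1,m}` with `1 ≤ m ≤ k`. -/
def IsSkFactor {V : Type} [Fintype V] (G H : SimpleGraph V) (k : ℕ) : Prop :=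
  H ≤ G ∧ ∀ c : H.ConnectedComponent, ∃ m : ℕ, 1 ≤ m ∧ m ≤ k ∧
    Nonempty ((H.induce c.supp) ≃g completeBipartiteGraph Unit (Fin m))

/-!
Both radii are compared with `θ = 2n - 6 + 4/(n - 2)`. The partition of `modelA n s a` into
`K_s`, the independent set and the second clique is equitable, so `Q` maps block-constant
vectors to block-constant vectors through a `3 × 3` quotient matrix. For `s ≥ 3` an explicit
positive block vector `w` satisfies `Q w ≤ θ w`, which bounds every real eigenvalue by `θ`
(Collatz–Wielandt). For `s = a = 2` the nonnegative block vector `(n, 0, n - 2)` satisfies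
`Q w ≥ θ w`, so `θ` is at most the Rayleigh quotient of `w`, hence at most the largest
eigenvalue of the symmetric matrix `Q`. After shifting variables, the only nontrivial row
inequality becomes a polynomial with nonnegative coefficients.
-/

open Matrix

section Spectral

variable {V : Type} [Fintype V]

theorem eigenvalue_le_of_mulVec_le {M : Matrix V V ℝ} (hM : ∀ i j, 0 ≤ M i j) {w : V → ℝ}
    (hw : ∀ i, 0 < w i) {θ : ℝ} (h : ∀ i, (M *ᵥ w) i ≤ θ * w i) {t : ℝ} {x : V → ℝ}
    (hx : x ≠ 0) (hxt : M *ᵥ x = t • x) : t ≤ θ := by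
  obtain ⟨i₀, hi₀⟩ := Function.ne_iff.mp hx
  obtain ⟨i, -, hi⟩ := Finset.exists_max_image Finset.univ (fun j ↦ |x j| / w j)
    ⟨i₀, Finset.mem_univ _⟩
  set c := |x i| / w i
  have hxw : ∀ j, |x j| ≤ c * w j := fun j ↦
    (div_le_iff₀ (hw j)).mp (hi j (Finset.mem_univ _))
  have hxi : 0 < |x i| := by
    have := (div_pos (abs_pos.mpr hi₀) (hw i₀)).trans_le (hi i₀ (Finset.mem_univ _))
    exact (div_pos_iff_of_pos_right (hw i)).mp this
  have key : |t| * |x i| ≤ θ * |x i| :=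
    calc |t| * |x i| = |∑ j, M i j * x j| := by
          rw [← abs_mul, ← smul_eq_mul, ← Pi.smul_apply t x, ← hxt]; rfl
      _ ≤ ∑ j, M i j * (c * w j) := by
          refine (Finset.abs_sum_le_sum_abs _ _).trans (Finset.sum_le_sum fun j _ ↦ ?_)
          rw [abs_mul, abs_of_nonneg (hM i j)]
          exact mul_le_mul_of_nonneg_left (hxw j) (hM i j)
      _ = c * (M *ᵥ w) i := by
          simp only [mulVec, dotProduct, Finset.mul_sum]
          exact Finset.sum_congr rfl fun j _ ↦ by ring
      _ ≤ c * (θ * w i) := mul_le_mul_of_nonneg_left (h i) (div_nonneg (abs_nonneg _) (hw i).le)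
      _ = θ * |x i| := by rw [mul_left_comm]; exact congrArg _ (div_mul_cancel₀ _ (hw i).ne')
  exact (le_abs_self t).trans (le_of_mul_le_mul_right key hxi)

theorem bddAbove_eigenvalues [DecidableEq V] (M : Matrix V V ℝ) :
    BddAbove {t : ℝ | ∃ x : V → ℝ, x ≠ 0 ∧ M *ᵥ x = t • x} := by
  refine (finite_real_spectrum (A := M)).bddAbove.mono ?_
  rintro t ⟨x, hx, hxt⟩
  rw [← spectrum_toLin']
  exact (Module.End.hasEigenvalue_of_hasEigenvector
    ⟨Module.End.mem_eigenspace_iff.mpr (by simpa using hxt), hx⟩).mem_spectrum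

theorem maxEig_le_of_mulVec_le {M : Matrix V V ℝ} (hM : ∀ i j, 0 ≤ M i j) {w : V → ℝ}
    (hw : ∀ i, 0 < w i) {θ : ℝ} (hθ : 0 ≤ θ) (h : ∀ i, (M *ᵥ w) i ≤ θ * w i) :
    maxEig M ≤ θ :=
  Real.sSup_le (fun _ ⟨_, hx, hxt⟩ ↦ eigenvalue_le_of_mulVec_le hM hw h hx hxt) hθ

open scoped MatrixOrder in
theorem le_maxEig_of_le_mulVec [DecidableEq V] {M : Matrix V V ℝ} (hM : M.IsHermitian)
    {w : V → ℝ} (hw0 : ∀ i, 0 ≤ w i) (hw : w ≠ 0) {θ : ℝ} (h : ∀ i, θ * w i ≤ (M *ᵥ w) i) :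
    θ ≤ maxEig M := by
  have hspec : ∀ t ∈ spectrum ℝ M, t ≤ maxEig M := by
    intro t ht
    rw [hM.spectrum_real_eq_range_eigenvalues] at ht
    obtain ⟨j, rfl⟩ := ht
    refine le_csSup (bddAbove_eigenvalues M) ⟨_, fun h0 ↦ ?_, hM.mulVec_eigenvectorBasis j⟩
    exact hM.eigenvectorBasis.orthonormal.ne_zero j (by ext i; exact congrFun h0 i)
  -- `maxEig M • 1 - M` is positive semidefinite, which bounds the Rayleigh quotient of `w`.
  have hpsd : (algebraMap ℝ (Matrix V V ℝ) (maxEig M) - M).PosSemidef :=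
    le_algebraMap_of_spectrum_le hspec hM.isSelfAdjoint
  have hwMw := hpsd.dotProduct_mulVec_nonneg w
  simp only [star_trivial, Algebra.algebraMap_eq_smul_one, sub_mulVec, smul_mulVec, one_mulVec,
    dotProduct_sub, dotProduct_smul, smul_eq_mul, sub_nonneg] at hwMw
  have hθw : w ⬝ᵥ (θ • w) ≤ w ⬝ᵥ (M *ᵥ w) :=
    dotProduct_le_dotProduct_of_nonneg_left (fun i ↦ h i) hw0
  rw [dotProduct_smul, smul_eq_mul] at hθw
  have hww : 0 < w ⬝ᵥ w := by simpa using dotProduct_self_star_pos_iff.mpr hw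
  exact le_of_mul_le_mul_right (hθw.trans hwMw) hww

end Spectral

section SignlessLaplacian

variable {V : Type} [Fintype V]

lemma adjMat_nonneg (G : SimpleGraph V) (i j : V) : 0 ≤ adjMat G i j := by
  unfold adjMat; split_ifs <;> norm_num

lemma adjMat_transpose (G : SimpleGraph V) : (adjMat G)ᵀ = adjMat G := by
  ext i j; classical exact if_congr (G.adj_comm j i) rfl rfl

variable [DecidableEq V]

lemma qMat_nonneg (G : SimpleGraph V) (i j : V) : 0 ≤ qMat G i j :=
  add_nonneg (by rw [diagonal_apply]; split_ifs <;> simp [Finset.sum_nonneg, adjMat_nonneg])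
    (adjMat_nonneg G i j)

lemma qMat_isHermitian (G : SimpleGraph V) : (qMat G).IsHermitian := by
  simp [IsHermitian, qMat, transpose_add, adjMat_transpose]

lemma qMat_mulVec_apply (G : SimpleGraph V) (w : V → ℝ) (i : V) :
    (qMat G *ᵥ w) i = ∑ j, adjMat G i j * (w i + w j) := by
  rw [qMat, add_mulVec, Pi.add_apply, mulVec_diagonal]
  simp only [mulVec, dotProduct, mul_add, Finset.sum_add_distrib, Finset.sum_mul]

end SignlessLaplacian

def modelPart (s a i : ℕ) : Fin 3 := if i < s then 0 else if i < s + a then 1 else 2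

/-- The quotient of `qMat (modelA n s a)` for the partition `modelPart s a`, where `c` stands
for the size `n - s - a` of the second clique. -/
def modelAQuot (s a c : ℝ) : Matrix (Fin 3) (Fin 3) ℝ :=
  !![2 * s + a + c - 2, a, c; s, s, 0; s, 0, s + 2 * c - 2]

lemma modelAQuot_mulVec (s a c : ℝ) (v : Fin 3 → ℝ) :
    modelAQuot s a c *ᵥ v = ![(2 * s + a + c - 2) * v 0 + a * v 1 + c * v 2,
      s * v 0 + s * v 1, s * v 0 + (s + 2 * c - 2) * v 2] := by
  ext x
  fin_cases x <;>
    simp only [modelAQuot, mulVec, dotProduct, Fin.sum_univ_three, of_apply, cons_val',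
      cons_val_fin_one, Fin.zero_eta, Fin.mk_one, Fin.reduceFinMk, Fin.isValue, cons_val_zero,
      cons_val_one, cons_val] <;>
    ring

section ModelA

variable {n s a : ℕ}

lemma modelA_adj_iff {i j : Fin n} : (modelA n s a).Adj i j ↔ i ≠ j ∧
    (modelPart s a i = 0 ∨ modelPart s a j = 0 ∨ (modelPart s a i = 2 ∧ modelPart s a j = 2)) := by
  simp only [modelA, modelPart]
  split_ifs <;>
    simp only [ne_eq, Fin.isValue, Fin.reduceEq, one_ne_zero, and_self, and_true, and_false,
      or_self, or_false, or_true, iff_false, and_iff_left_iff_imp, not_and, not_or, not_lt,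
      not_le] <;> omega

lemma sum_modelPart (hsa : s + a ≤ n) (g : Fin 3 → ℝ) :
    ∑ j : Fin n, g (modelPart s a j) = s * g 0 + a * g 1 + ((n - (s + a) : ℕ) : ℝ) * g 2 := by
  rw [Fin.sum_univ_eq_sum_range (fun j ↦ g (modelPart s a j)), Finset.range_eq_Ico,
    ← Finset.sum_Ico_consecutive _ (Nat.zero_le _) hsa,
    ← Finset.sum_Ico_consecutive _ (Nat.zero_le _) (Nat.le_add_right s a)]
  have h0 : ∀ j ∈ Finset.Ico 0 s, g (modelPart s a j) = g 0 := fun j hj ↦ by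
    simp only [Finset.mem_Ico] at hj; simp [modelPart, hj.2]
  have h1 : ∀ j ∈ Finset.Ico s (s + a), g (modelPart s a j) = g 1 := fun j hj ↦ by
    simp only [Finset.mem_Ico] at hj; simp [modelPart, hj.2, hj.1.not_gt]
  have h2 : ∀ j ∈ Finset.Ico (s + a) n, g (modelPart s a j) = g 2 := fun j hj ↦ by
    simp only [Finset.mem_Ico] at hj
    simp [modelPart, hj.1.not_gt, (le_of_add_le_left hj.1).not_gt]
  rw [Finset.sum_congr rfl h0, Finset.sum_congr rfl h1, Finset.sum_congr rfl h2]
  simp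

lemma qMat_modelA_mulVec (hsa : s + a ≤ n) (v : Fin 3 → ℝ) (i : Fin n) :
    (qMat (modelA n s a) *ᵥ fun j ↦ v (modelPart s a j)) i =
      (modelAQuot s a (n - (s + a) : ℕ) *ᵥ v) (modelPart s a i) := by
  let R : Fin 3 → Fin 3 → Prop := fun x y ↦ x = 0 ∨ y = 0 ∨ (x = 2 ∧ y = 2)
  -- Adjacency in `modelA` is `i ≠ j ∧ R`: sum over all `j` satisfying `R`, then remove `j = i`.
  have hterm : ∀ j : Fin n,
      adjMat (modelA n s a) i j * (v (modelPart s a i) + v (modelPart s a j)) =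
        (if R (modelPart s a i) (modelPart s a j) then
          v (modelPart s a i) + v (modelPart s a j) else 0) -
        if j = i then (if R (modelPart s a i) (modelPart s a i) then
          2 * v (modelPart s a i) else 0) else 0 := by
    intro j
    by_cases hji : j = i
    · subst hji; simp [adjMat, two_mul]
    · simp [adjMat, modelA_adj_iff, Ne.symm hji, hji, R]
  rw [qMat_mulVec_apply, Finset.sum_congr rfl fun j _ ↦ hterm j, Finset.sum_sub_distrib,
    Finset.sum_ite_eq', sum_modelPart hsa
      (fun y ↦ if R (modelPart s a i) y then v (modelPart s a i) + v y else 0)]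
  generalize modelPart s a i = x
  fin_cases x <;>
    simp only [R, modelAQuot_mulVec, Finset.mem_univ, ↓reduceIte, Fin.reduceEq, one_ne_zero,
      and_self, and_true, and_false, or_self, or_self_left, or_false, or_true, mul_zero, add_zero,
      sub_zero, Fin.zero_eta, Fin.mk_one, Fin.reduceFinMk, Fin.isValue, cons_val_zero,
      cons_val_one, cons_val] <;>
    ring

theorem qRad_modelA_le_of_mulVec_le (hsa : s + a ≤ n) {v : Fin 3 → ℝ} (hv : ∀ x, 0 < v x)
    {θ : ℝ} (hθ : 0 ≤ θ) (h : ∀ x, (modelAQuot s a (n - (s + a) : ℕ) *ᵥ v) x ≤ θ * v x) :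
    qRad (modelA n s a) ≤ θ :=
  maxEig_le_of_mulVec_le (qMat_nonneg _) (fun _ ↦ hv _) hθ fun i ↦ by
    rw [qMat_modelA_mulVec hsa]; exact h _

theorem le_qRad_modelA_of_le_mulVec (hsa : s + a ≤ n) (hs : 0 < s) {v : Fin 3 → ℝ}
    (hv : ∀ x, 0 ≤ v x) (hv0 : v 0 ≠ 0) {θ : ℝ}
    (h : ∀ x, θ * v x ≤ (modelAQuot s a (n - (s + a) : ℕ) *ᵥ v) x) :
    θ ≤ qRad (modelA n s a) := by
  refine le_maxEig_of_le_mulVec (w := fun j : Fin n ↦ v (modelPart s a j)) (qMat_isHermitian _)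
    (fun _ ↦ hv _) (fun h0 ↦ hv0 ?_) fun i ↦ ?_
  · simpa [modelPart, hs] using congrFun h0 ⟨0, by omega⟩
  · rw [qMat_modelA_mulVec hsa]; exact h _

end ModelA

/-- With `N = S + A + C` and `θ = 2N - 6 + 4/(N - 2)`, the entries are chosen so that in the
rows of the independent set and of the second clique, `modelAQuot S A C` applied to this vector
is at most `θ` times it, the latter row with equality. -/
def modelATestVec (S A C : ℝ) : Fin 3 → ℝ :=
  let D := S + A + C - 2
  let G := S + 2 * A + 2 * C - 6
  let P := (2 * A + S - 4) * D + 4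
  ![P * G, S * P, S * G * D]

section TestVec

variable {S A C : ℝ}

lemma modelATestVec_pos (hS : 3 ≤ S) (hA : 2 * S - 2 ≤ A) (hC : 0 ≤ C) (x : Fin 3) :
    0 < modelATestVec S A C x := by
  have hD : 0 < S + A + C - 2 := by linarith
  have hG : 0 < S + 2 * A + 2 * C - 6 := by linarith
  have hP : 0 < (2 * A + S - 4) * (S + A + C - 2) + 4 := by nlinarith
  fin_cases x <;>
    simp only [modelATestVec, Fin.zero_eta, Fin.mk_one, Fin.reduceFinMk, Fin.isValue,
      cons_val_zero, cons_val_one, cons_val] <;>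
    positivity

lemma modelAQuot_mulVec_testVec_le (hA : 2 * S - 2 ≤ A) (hC : 0 ≤ C)
    (hS : 4 ≤ S ∨ (S = 3 ∧ A - 1 ≤ C)) (x : Fin 3) :
    (S + A + C - 2) * (modelAQuot S A C *ᵥ modelATestVec S A C) x ≤
      ((2 * (S + A + C) - 6) * (S + A + C - 2) + 4) * modelATestVec S A C x := by
  -- In the shifted variables every coefficient of the difference is nonnegative.
  rcases hS with hS | ⟨rfl, hCA⟩
  · obtain ⟨t, ht, rfl⟩ : ∃ t ≥ 0, S = 4 + t := ⟨S - 4, by linarith, by ring⟩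
    obtain ⟨u, hu, rfl⟩ : ∃ u ≥ 0, A = 6 + 2 * t + u := ⟨A - (6 + 2 * t), by linarith, by ring⟩
    fin_cases x <;>
      simp only [modelATestVec, modelAQuot_mulVec, Fin.zero_eta, Fin.mk_one, Fin.reduceFinMk,
        Fin.isValue, cons_val_zero, cons_val_one, cons_val] <;>
      rw [← sub_nonneg] <;> ring_nf <;> positivity
  · obtain ⟨u, hu, rfl⟩ : ∃ u ≥ 0, A = 4 + u := ⟨A - 4, by linarith, by ring⟩
    obtain ⟨w, hw, rfl⟩ : ∃ w ≥ 0, C = 3 + u + w := ⟨C - (3 + u), by linarith, by ring⟩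
    fin_cases x <;>
      simp only [modelATestVec, modelAQuot_mulVec, Fin.zero_eta, Fin.mk_one, Fin.reduceFinMk,
        Fin.isValue, cons_val_zero, cons_val_one, cons_val] <;>
      rw [← sub_nonneg] <;> ring_nf <;> positivity

end TestVec

lemma le_add_div_mul_of_mul_le {c e D y z : ℝ} (hD : 0 < D) (h : D * y ≤ (c * D + e) * z) :
    y ≤ (c + e / D) * z := by
  rw [show (c + e / D) * z = (c * D + e) * z / D by field_simp, le_div_iff₀ hD]
  linarith

lemma add_div_mul_le_of_le_mul {c e D y z : ℝ} (hD : 0 < D) (h : (c * D + e) * z ≤ D * y) :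
    (c + e / D) * z ≤ y := by
  rw [show (c + e / D) * z = (c * D + e) * z / D by field_simp, div_le_iff₀ hD]
  linarith

section Bounds

variable {n s a : ℕ}

theorem qRad_modelA_le (hsa : s + a ≤ n) (ha : 2 * s ≤ a + 2)
    (hs : 4 ≤ s ∨ (s = 3 ∧ 2 * a + 2 ≤ n)) :
    qRad (modelA n s a) ≤ 2 * n - 6 + 4 / (n - 2) := by
  set C : ℝ := ((n - (s + a) : ℕ) : ℝ) with hC
  have hn : (n : ℝ) = s + a + C := by rw [hC, Nat.cast_sub hsa]; push_cast; ring
  have hs3 : (3 : ℝ) ≤ s := by exact_mod_cast (show 3 ≤ s by omega)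
  have hA : 2 * (s : ℝ) - 2 ≤ a := by
    have : 2 * (s : ℝ) ≤ a + 2 := by exact_mod_cast ha
    linarith
  have hC0 : 0 ≤ C := Nat.cast_nonneg _
  have hS : 4 ≤ (s : ℝ) ∨ ((s : ℝ) = 3 ∧ (a : ℝ) - 1 ≤ C) := by
    rcases hs with hs | ⟨rfl, hn'⟩
    · exact Or.inl (by exact_mod_cast hs)
    · refine Or.inr ⟨by norm_num, ?_⟩
      have : 2 * (a : ℝ) + 2 ≤ n := by exact_mod_cast hn'
      push_cast at hn; linarith
  have hD : (0 : ℝ) < s + a + C - 2 := by linarith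
  rw [hn]
  refine qRad_modelA_le_of_mulVec_le hsa (modelATestVec_pos hs3 hA hC0)
    (add_nonneg (by linarith) (div_nonneg zero_le_four hD.le)) fun x ↦ ?_
  exact le_add_div_mul_of_mul_le hD (modelAQuot_mulVec_testVec_le hA hC0 hS x)

theorem le_qRad_modelA_two_two (hn : 4 ≤ n) :
    2 * n - 6 + 4 / (n - 2) ≤ qRad (modelA n 2 2) := by
  obtain ⟨t, rfl⟩ : ∃ t, n = t + 4 := ⟨n - 4, by omega⟩
  have hv : ∀ x, 0 ≤ ![(t : ℝ) + 4, 0, t + 2] x := fun x ↦ by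
    fin_cases x <;>
      simp only [Fin.zero_eta, Fin.mk_one, Fin.reduceFinMk, Fin.isValue, cons_val_zero,
        cons_val_one, cons_val] <;>
      positivity
  refine le_qRad_modelA_of_le_mulVec (by omega) two_pos hv
    (by simp only [cons_val_zero]; positivity) fun x ↦ ?_
  refine add_div_mul_le_of_le_mul (by push_cast; linarith) ?_
  fin_cases x <;>
    simp only [modelAQuot_mulVec, Nat.cast_add, Nat.cast_ofNat, add_tsub_cancel_right,
      Fin.zero_eta, Fin.mk_one, Fin.reduceFinMk, Fin.isValue, cons_val_zero, cons_val_one,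
      cons_val] <;>
    rw [← sub_nonneg] <;> ring_nf <;> positivity

end Bounds

theorem stmt_14_general (n s k : ℕ) (hk : 2 ≤ k)
    (h1 : 2 * k + 6 ≤ n) (h2 : (k + 1) * s + 2 ≤ n + 2 * k) (hs2 : 2 < s) :
    qRad (modelA n s (k * s - 2 * k + 2)) ≤ qRad (modelA n 2 2) := by
  have hks : 2 * k + 2 * s ≤ k * s + 4 := by nlinarith
  have h2' : (k + 1) * s = k * s + s := by ring
  have hs3 : s = 3 ∨ 4 ≤ s := by omega
  refine (qRad_modelA_le (by omega) (by omega) ?_).trans (le_qRad_modelA_two_two (by omega))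
  rcases hs3 with rfl | hs4
  · exact Or.inr ⟨rfl, by omega⟩
  · exact Or.inl hs4

/-- Lemma: for `k ≥ 2`, `n ≥ 2k + 6`, `n ≥ (k+1)s - 2k + 2` and `s > 2`,
`q(K_s ∨ ((ks-2k+2)K_1 ∪ K_{n-(k+1)s+2k-2})) ≤ q(K_2 ∨ (2K_1 ∪ K_{n-4}))`. -/
theorem stmt_14 (n s k : ℕ) (hk : 2 ≤ k) (hs : 2 ≤ s)
    (h1 : 2 * k + 6 ≤ n) (h2 : (k + 1) * s + 2 ≤ n + 2 * k) (hs2 : 2 < s) :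
    qRad (modelA n s (k * s - 2 * k + 2)) ≤ qRad (modelA n 2 2) :=
  stmt_14_general n s k hk h1 h2 hs2
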